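/- arXiv:2403.16727 — 3 statements merged into one kernel-verified Lean document; each statement's English description precedes it below -/
import Mathlib

section
/- Let x⁻ ∈ [0,1]^{n₀}, let j be uniform on {1,…,n₀} and independent of Θ ∈ [0,1], and let x⁺ be x⁻ with coordinate j replaced by Θ. Then E[V²(x⁺) | x⁻, Θ] ≤ (1 − 2/n₀)V²(x⁻) + Θ⁴/n₀² + (1/n₀² + 2Θ²/n₀ − 2Θ²/n₀²)V(x⁻), where V(x) = ||x||²/n₀. -/
theorem stmt_10 (n₀ : ℕ) (hn₀ : 1 ≤ n₀)
    (x : Fin n₀ → ℝ) (hx : ∀ i, x i ∈ Set.Icc (0:ℝ) 1)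
    (θ : ℝ) (hθ : θ ∈ Set.Icc (0:ℝ) 1)
    (V : (Fin n₀ → ℝ) → ℝ) (hV : ∀ y, V y = (∑ i, y i ^ 2) / n₀) :
    (1 / n₀ : ℝ) * ∑ j, (V (Function.update x j θ)) ^ 2
      ≤ (1 - 2 / n₀) * (V x) ^ 2 + θ ^ 4 / n₀ ^ 2
        + (1 / n₀ ^ 2 + 2 * θ ^ 2 / n₀ - 2 * θ ^ 2 / n₀ ^ 2) * V x := by
  have hn : (1:ℝ) ≤ (n₀:ℝ) := by exact_mod_cast hn₀
  have hnpos : (0:ℝ) < (n₀:ℝ) := by linarith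
  set S := ∑ i, x i ^ 2 with hSdef
  set T := ∑ i, (x i ^ 2) ^ 2 with hTdef
  have hupd : ∀ j : Fin n₀, ∑ i, (Function.update x j θ i) ^ 2 = θ ^ 2 + S - x j ^ 2 := by
    intro j
    have h1 : (fun i => (Function.update x j θ i) ^ 2)
        = Function.update (fun i => x i ^ 2) j (θ ^ 2) := by
      funext i
      exact Function.apply_update (fun _ v => v ^ 2) x j θ i
    rw [h1, Finset.sum_update_of_mem (Finset.mem_univ j),
      Finset.sum_sdiff_eq_sub (Finset.subset_univ {j}), Finset.sum_singleton, ← hSdef]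
    ring
  have hterm : ∀ j : Fin n₀, (V (Function.update x j θ)) ^ 2
      = ((θ ^ 2 + S) ^ 2 - 2 * (θ ^ 2 + S) * (x j ^ 2) + (x j ^ 2) ^ 2) / (n₀:ℝ) ^ 2 := by
    intro j
    rw [hV, hupd j]
    field_simp
    ring
  have hsum : ∑ j, (V (Function.update x j θ)) ^ 2
      = ((n₀:ℝ) * (θ ^ 2 + S) ^ 2 - 2 * (θ ^ 2 + S) * S + T) / (n₀:ℝ) ^ 2 := by
    simp_rw [hterm]
    rw [← Finset.sum_div]
    congr 1
    rw [Finset.sum_add_distrib, Finset.sum_sub_distrib, Finset.sum_const,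
      ← Finset.mul_sum, Finset.card_univ, Fintype.card_fin, ← hSdef, ← hTdef]
    push_cast
    ring
  have hT : T ≤ S := by
    apply Finset.sum_le_sum
    intro i _
    have h := hx i
    have hq : x i ^ 2 ≤ 1 := by nlinarith [h.1, h.2]
    nlinarith [sq_nonneg (x i), hq]
  rw [hsum, hV x, ← hSdef]
  rw [← sub_nonneg]
  have key : (1 - 2 / (n₀:ℝ)) * (S / n₀) ^ 2 + θ ^ 4 / (n₀:ℝ) ^ 2
      + (1 / (n₀:ℝ) ^ 2 + 2 * θ ^ 2 / n₀ - 2 * θ ^ 2 / (n₀:ℝ) ^ 2) * (S / n₀)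
      - (1 / n₀ : ℝ) * (((n₀:ℝ) * (θ ^ 2 + S) ^ 2 - 2 * (θ ^ 2 + S) * S + T) / (n₀:ℝ) ^ 2)
      = (S - T) / (n₀:ℝ) ^ 3 := by
    field_simp
    ring
  rw [key]
  apply div_nonneg (by linarith) (by positivity)
end

section
/- Under a uniform replacement with new value Θ supported in [0,1], E[V²(x⁺)] − E[V²(x⁻)] ≤ −(2/n₀)E[V²(x⁻)] + E[Θ⁴]/n₀² + ((2E[Θ²](n₀ − 1) + 1)/n₀²)·E[V(x⁻)]. -/
open MeasureTheory

private lemma aux_int {α : Type*} [MeasurableSpace α] {μ : Measure α} [IsFiniteMeasure μ]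
    {f : α → ℝ} {C : ℝ} (hf : Measurable f) (hb : ∀ᵐ a ∂μ, |f a| ≤ C) : Integrable f μ :=
  (integrable_const C).mono' hf.aestronglyMeasurable (by simpa [Real.norm_eq_abs] using hb)

private lemma aux_sum_update {n : ℕ} (x : Fin n → ℝ) (j : Fin n) (θ : ℝ) :
    ∑ i, (Function.update x j θ i) ^ 2 = (∑ i, x i ^ 2) - x j ^ 2 + θ ^ 2 := by
  have h : ∀ i, (Function.update x j θ i) ^ 2
      = Function.update (fun i => x i ^ 2) j (θ ^ 2) i := by
    intro i
    rcases eq_or_ne i j with h | h <;> simp [Function.update_apply, h]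
  rw [Finset.sum_congr rfl fun i _ => h i,
    Finset.sum_update_of_mem (Finset.mem_univ j),
    Finset.sum_sdiff_eq_sub (Finset.singleton_subset_iff.mpr (Finset.mem_univ j))]
  simp; ring

set_option maxHeartbeats 1000000 in
theorem stmt_11 {Ω₁ Ω₂ : Type*} [MeasurableSpace Ω₁] [MeasurableSpace Ω₂]
    (μ₁ : Measure Ω₁) (μ₂ : Measure Ω₂)
    [IsProbabilityMeasure μ₁] [IsProbabilityMeasure μ₂]
    (n₀ : ℕ) (hn₀ : 1 ≤ n₀)
    (X : Ω₁ → Fin n₀ → ℝ) (hXmeas : Measurable X)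
    (hXrange : ∀ᵐ ω ∂μ₁, ∀ i, X ω i ∈ Set.Icc (0:ℝ) 1)
    (Θ : Ω₂ → ℝ) (hΘmeas : Measurable Θ)
    (hΘrange : ∀ᵐ ω ∂μ₂, Θ ω ∈ Set.Icc (0:ℝ) 1)
    (V : (Fin n₀ → ℝ) → ℝ) (hV : ∀ y, V y = (∑ i, y i ^ 2) / n₀) :
    (1 / n₀ : ℝ) * ∑ j, ∫ ω, (V (Function.update (X ω.1) j (Θ ω.2))) ^ 2 ∂(μ₁.prod μ₂)
        - ∫ ω, (V (X ω)) ^ 2 ∂μ₁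
      ≤ -(2 / n₀) * ∫ ω, (V (X ω)) ^ 2 ∂μ₁
        + (∫ ω, Θ ω ^ 4 ∂μ₂) / n₀ ^ 2
        + ((2 * (∫ ω, Θ ω ^ 2 ∂μ₂) * (n₀ - 1) + 1) / n₀ ^ 2) * ∫ ω, V (X ω) ∂μ₁ := by
  have hn : (0:ℝ) < (n₀:ℝ) := by exact_mod_cast hn₀
  set P := μ₁.prod μ₂ with hP
  -- a.e. ranges on the product
  have hX' : ∀ᵐ ω ∂P, ∀ i, X ω.1 i ∈ Set.Icc (0:ℝ) 1 :=
    (Measure.quasiMeasurePreserving_fst (μ := μ₁) (ν := μ₂)).ae hXrange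
  have hΘ' : ∀ᵐ ω ∂P, Θ ω.2 ∈ Set.Icc (0:ℝ) 1 :=
    (Measure.quasiMeasurePreserving_snd (μ := μ₁) (ν := μ₂)).ae hΘrange
  -- measurability facts
  have hSmeas : Measurable fun a : Ω₁ => ∑ i, X a i ^ 2 :=
    Finset.measurable_sum _ fun i _ => ((hXmeas.eval (a := i)).pow_const 2)
  have hVmeas : Measurable fun a : Ω₁ => V (X a) := by
    simpa [hV] using hSmeas.div_const (n₀ : ℝ)
  -- a.e. bounds for V
  have hVbd : ∀ᵐ a ∂μ₁, 0 ≤ V (X a) ∧ V (X a) ≤ 1 := by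
    filter_upwards [hXrange] with a ha
    have h1 : (0:ℝ) ≤ ∑ i, X a i ^ 2 := Finset.sum_nonneg fun i _ => sq_nonneg _
    have h2 : (∑ i, X a i ^ 2) ≤ (n₀:ℝ) := by
      calc (∑ i, X a i ^ 2) ≤ ∑ _i : Fin n₀, (1:ℝ) := by
            refine Finset.sum_le_sum fun i _ => ?_
            have := (ha i).1; have := (ha i).2; nlinarith
        _ = (n₀:ℝ) := by simp
    constructor
    · rw [hV]; positivity
    · rw [hV]; rw [div_le_one hn]; linarith
  -- integrability of the per-index functions
  have hfj_meas : ∀ j : Fin n₀,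
      Measurable fun ω : Ω₁ × Ω₂ => (V (Function.update (X ω.1) j (Θ ω.2))) ^ 2 := by
    intro j
    have : ∀ ω : Ω₁ × Ω₂, (V (Function.update (X ω.1) j (Θ ω.2))) ^ 2
        = ((((∑ i, X ω.1 i ^ 2) - X ω.1 j ^ 2 + Θ ω.2 ^ 2) / n₀)) ^ 2 := by
      intro ω; rw [hV, aux_sum_update]
    simp_rw [this]
    exact ((((hSmeas.comp measurable_fst).sub
      (((hXmeas.eval (a := j)).comp measurable_fst).pow_const 2)).add
      ((hΘmeas.comp measurable_snd).pow_const 2)).div_const _).pow_const 2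
  have hVupd_bd : ∀ᵐ ω ∂P, ∀ j : Fin n₀,
      0 ≤ V (Function.update (X ω.1) j (Θ ω.2)) ∧ V (Function.update (X ω.1) j (Θ ω.2)) ≤ 1 := by
    filter_upwards [hX', hΘ'] with ω hx hθ j
    have h1 : (0:ℝ) ≤ ∑ i, (Function.update (X ω.1) j (Θ ω.2) i) ^ 2 :=
      Finset.sum_nonneg fun i _ => sq_nonneg _
    have h2 : (∑ i, (Function.update (X ω.1) j (Θ ω.2) i) ^ 2) ≤ (n₀:ℝ) := by
      calc (∑ i, (Function.update (X ω.1) j (Θ ω.2) i) ^ 2) ≤ ∑ _i : Fin n₀, (1:ℝ) := by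
            refine Finset.sum_le_sum fun i _ => ?_
            rcases eq_or_ne i j with h | h
            · subst h
              rw [Function.update_self]
              nlinarith [hθ.1, hθ.2]
            · rw [Function.update_of_ne h]
              nlinarith [(hx i).1, (hx i).2]
        _ = (n₀:ℝ) := by simp
    constructor
    · rw [hV]; positivity
    · rw [hV]; rw [div_le_one hn]; linarith
  have hfj_int : ∀ j : Fin n₀,
      Integrable (fun ω : Ω₁ × Ω₂ => (V (Function.update (X ω.1) j (Θ ω.2))) ^ 2) P := by
    intro j
    refine aux_int (C := 1) (hfj_meas j) ?_
    filter_upwards [hVupd_bd] with ω hω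
    obtain ⟨h0, h1⟩ := hω j
    rw [abs_le]; constructor <;> nlinarith
  -- integrability of pieces of G
  have hV2_int : Integrable (fun a => (V (X a)) ^ 2) μ₁ := by
    refine aux_int (C := 1) (hVmeas.pow_const 2) ?_
    filter_upwards [hVbd] with a ⟨h0, h1⟩
    rw [abs_le]; constructor <;> nlinarith
  have hV_int : Integrable (fun a => V (X a)) μ₁ := by
    refine aux_int (C := 1) hVmeas ?_
    filter_upwards [hVbd] with a ⟨h0, h1⟩
    rw [abs_le]; constructor <;> linarith
  have hΘ2_int : Integrable (fun b => Θ b ^ 2) μ₂ := by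
    refine aux_int (C := 1) (hΘmeas.pow_const 2) ?_
    filter_upwards [hΘrange] with b ⟨h0, h1⟩
    rw [abs_le]
    exact ⟨by nlinarith [pow_nonneg h0 2], by nlinarith [pow_le_one₀ h0 h1 (n := 2)]⟩
  have hΘ4_int : Integrable (fun b => Θ b ^ 4) μ₂ := by
    refine aux_int (C := 1) (hΘmeas.pow_const 4) ?_
    filter_upwards [hΘrange] with b ⟨h0, h1⟩
    rw [abs_le]
    exact ⟨by nlinarith [pow_nonneg h0 4], by nlinarith [pow_le_one₀ h0 h1 (n := 4)]⟩
  -- integrals over product of functions of one coordinate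
  have fst_eq : ∀ (h : Ω₁ → ℝ), ∫ ω, h ω.1 ∂P = ∫ a, h a ∂μ₁ := by
    intro h
    simpa using integral_prod_mul (μ := μ₁) (ν := μ₂) h (fun _ => (1:ℝ))
  have snd_eq : ∀ (h : Ω₂ → ℝ), ∫ ω, h ω.2 ∂P = ∫ b, h b ∂μ₂ := by
    intro h
    simpa using integral_prod_mul (μ := μ₁) (ν := μ₂) (fun _ => (1:ℝ)) h
  -- integrability over the product
  have hV2P : Integrable (fun ω : Ω₁ × Ω₂ => (V (X ω.1)) ^ 2) P := by
    simpa using hV2_int.mul_prod (integrable_const (1:ℝ))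
  have hVP : Integrable (fun ω : Ω₁ × Ω₂ => V (X ω.1)) P := by
    simpa using hV_int.mul_prod (integrable_const (1:ℝ))
  have hΘ4P : Integrable (fun ω : Ω₁ × Ω₂ => Θ ω.2 ^ 4) P := by
    simpa using (integrable_const (1:ℝ)).mul_prod hΘ4_int
  have hmulP : Integrable (fun ω : Ω₁ × Ω₂ => Θ ω.2 ^ 2 * V (X ω.1)) P := by
    have := (hV_int.mul_prod hΘ2_int)
    -- (fun ω => V (X ω.1) * Θ ω.2 ^ 2)
    have h2 : Integrable (fun ω : Ω₁ × Ω₂ => V (X ω.1) * Θ ω.2 ^ 2) P := this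
    simpa [mul_comm] using h2
  -- define G
  set G : Ω₁ × Ω₂ → ℝ := fun ω =>
    (1 - 2 / n₀) * (V (X ω.1)) ^ 2 + Θ ω.2 ^ 4 / n₀ ^ 2
      + (2 * (n₀ - 1) / n₀ ^ 2) * (Θ ω.2 ^ 2 * V (X ω.1))
      + (1 / n₀ ^ 2) * V (X ω.1) with hG
  have hG_int : Integrable G P := by
    refine (((hV2P.const_mul _).add (hΘ4P.div_const _)).add (hmulP.const_mul _)).add
      (hVP.const_mul _)
  -- define F
  set F : Ω₁ × Ω₂ → ℝ := fun ω =>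
    (1 / n₀ : ℝ) * ∑ j, (V (Function.update (X ω.1) j (Θ ω.2))) ^ 2 with hF
  have hF_int : Integrable F P :=
    (integrable_finset_sum _ fun j _ => hfj_int j).const_mul _
  -- the pointwise inequality
  have hFG : F ≤ᵐ[P] G := by
    filter_upwards [hX', hΘ'] with ω hx hθ
    set x := X ω.1
    set θ := Θ ω.2
    set S := ∑ i, x i ^ 2 with hS
    have hx4 : (∑ i, x i ^ 4) ≤ S := by
      refine Finset.sum_le_sum fun i _ => ?_
      have h0 := (hx i).1
      have h1 := (hx i).2
      have hsq : x i ^ 2 ≤ 1 := by nlinarith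
      nlinarith [sq_nonneg (x i)]
    have hexp : ∑ j, (V (Function.update x j θ)) ^ 2
        = (∑ j, (S - x j ^ 2 + θ ^ 2) ^ 2) / n₀ ^ 2 := by
      rw [Finset.sum_div]
      refine Finset.sum_congr rfl fun j _ => ?_
      rw [hV, aux_sum_update, div_pow]
    have hsum2 : ∑ j, (S - x j ^ 2 + θ ^ 2) ^ 2
        ≤ (n₀:ℝ) * (S + θ ^ 2) ^ 2 - 2 * (S + θ ^ 2) * S + S := by
      have : ∑ j, (S - x j ^ 2 + θ ^ 2) ^ 2
          = (n₀:ℝ) * (S + θ ^ 2) ^ 2 - 2 * (S + θ ^ 2) * S + ∑ j, x j ^ 4 := by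
        have : ∀ j : Fin n₀, (S - x j ^ 2 + θ ^ 2) ^ 2
            = (S + θ ^ 2) ^ 2 - 2 * (S + θ ^ 2) * x j ^ 2 + x j ^ 4 := by
          intro j; ring
        rw [Finset.sum_congr rfl fun j _ => this j, Finset.sum_add_distrib,
          Finset.sum_sub_distrib, Finset.sum_const, ← Finset.mul_sum]
        simp only [Finset.sum_const, Finset.card_univ, Fintype.card_fin, nsmul_eq_mul, ← hS]
      linarith
    show F ω ≤ G ω
    rw [hF, hG]
    simp only
    rw [hexp, hV]
    have hVx : (∑ i, X ω.1 i ^ 2) = S := rfl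
    rw [hVx]
    have key : (1 / n₀ : ℝ) * ((∑ j, (S - x j ^ 2 + θ ^ 2) ^ 2) / n₀ ^ 2)
        ≤ (1 / n₀ : ℝ) * (((n₀:ℝ) * (S + θ ^ 2) ^ 2 - 2 * (S + θ ^ 2) * S + S) / n₀ ^ 2) := by
      have h1 : (0:ℝ) < 1 / (n₀:ℝ) := by positivity
      gcongr
    refine key.trans (le_of_eq ?_)
    field_simp
    ring
  -- compute ∫ F
  have hintF : ∫ ω, F ω ∂P
      = (1 / n₀ : ℝ) * ∑ j, ∫ ω, (V (Function.update (X ω.1) j (Θ ω.2))) ^ 2 ∂P := by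
    rw [hF]
    rw [integral_const_mul]
    rw [integral_finset_sum _ fun j _ => hfj_int j]
  -- compute ∫ G
  have hintG : ∫ ω, G ω ∂P
      = (1 - 2 / n₀) * (∫ a, (V (X a)) ^ 2 ∂μ₁) + (∫ b, Θ b ^ 4 ∂μ₂) / n₀ ^ 2
        + (2 * (n₀ - 1) / n₀ ^ 2) * ((∫ b, Θ b ^ 2 ∂μ₂) * (∫ a, V (X a) ∂μ₁))
        + (1 / n₀ ^ 2) * (∫ a, V (X a) ∂μ₁) := by
    have i1 : Integrable (fun ω : Ω₁ × Ω₂ => (1 - 2 / (n₀:ℝ)) * (V (X ω.1)) ^ 2) P :=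
      hV2P.const_mul _
    have i2 : Integrable (fun ω : Ω₁ × Ω₂ => Θ ω.2 ^ 4 / (n₀:ℝ) ^ 2) P := hΘ4P.div_const _
    have i3 : Integrable
        (fun ω : Ω₁ × Ω₂ => (2 * ((n₀:ℝ) - 1) / (n₀:ℝ) ^ 2) * (Θ ω.2 ^ 2 * V (X ω.1))) P :=
      hmulP.const_mul _
    have i4 : Integrable (fun ω : Ω₁ × Ω₂ => (1 / (n₀:ℝ) ^ 2) * V (X ω.1)) P :=
      hVP.const_mul _
    have i12 : Integrable (fun ω : Ω₁ × Ω₂ =>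
        (1 - 2 / (n₀:ℝ)) * (V (X ω.1)) ^ 2 + Θ ω.2 ^ 4 / (n₀:ℝ) ^ 2) P := i1.add i2
    have i123 : Integrable (fun ω : Ω₁ × Ω₂ =>
        (1 - 2 / (n₀:ℝ)) * (V (X ω.1)) ^ 2 + Θ ω.2 ^ 4 / (n₀:ℝ) ^ 2
          + (2 * ((n₀:ℝ) - 1) / (n₀:ℝ) ^ 2) * (Θ ω.2 ^ 2 * V (X ω.1))) P := i12.add i3
    rw [hG]
    rw [integral_add i123 i4, integral_add i12 i3, integral_add i1 i2]
    rw [integral_const_mul, integral_const_mul, integral_const_mul, integral_div]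
    have h1 : ∫ ω, (V (X ω.1)) ^ 2 ∂P = ∫ a, (V (X a)) ^ 2 ∂μ₁ :=
      fst_eq fun a => (V (X a)) ^ 2
    have h2 : ∫ ω, Θ ω.2 ^ 4 ∂P = ∫ b, Θ b ^ 4 ∂μ₂ := snd_eq fun b => Θ b ^ 4
    have h3 : ∫ ω, V (X ω.1) ∂P = ∫ a, V (X a) ∂μ₁ := fst_eq fun a => V (X a)
    have h4 : ∫ ω : Ω₁ × Ω₂, Θ ω.2 ^ 2 * V (X ω.1) ∂P
        = (∫ b, Θ b ^ 2 ∂μ₂) * (∫ a, V (X a) ∂μ₁) := by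
      have := integral_prod_mul (μ := μ₁) (ν := μ₂) (fun a => V (X a)) (fun b => Θ b ^ 2)
      simp only [mul_comm] at this ⊢
      exact this
    rw [h1, h2, h3, h4]
  have hmain := integral_mono_ae hF_int hG_int hFG
  rw [hintF, hintG] at hmain
  set EV2 := ∫ a, (V (X a)) ^ 2 ∂μ₁
  set EV := ∫ a, V (X a) ∂μ₁
  set T2 := ∫ b, Θ b ^ 2 ∂μ₂
  set T4 := ∫ b, Θ b ^ 4 ∂μ₂
  have : (1 / n₀ : ℝ) * ∑ j, ∫ ω, (V (Function.update (X ω.1) j (Θ ω.2))) ^ 2 ∂P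
      ≤ (1 - 2 / n₀) * EV2 + T4 / n₀ ^ 2 + (2 * (n₀ - 1) / n₀ ^ 2) * (T2 * EV)
        + (1 / n₀ ^ 2) * EV := hmain
  have heq : (1 - 2 / (n₀:ℝ)) * EV2 + T4 / n₀ ^ 2 + (2 * (n₀ - 1) / n₀ ^ 2) * (T2 * EV)
        + (1 / n₀ ^ 2) * EV
      = EV2 + (-(2 / n₀) * EV2 + T4 / n₀ ^ 2
        + ((2 * T2 * (n₀ - 1) + 1) / n₀ ^ 2) * EV) := by
    field_simp
    ring
  rw [heq] at this
  linarith
end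

section
/- Under the stability condition β̄p(n₀−1) < n₀δ̄ and the replacement process assumptions, limsup_{t→∞} E[V²(x(t))] ≤ [μE[Θ⁴](μ + 2n₀δ̄ − 2β̄p(n₀−1)) + μ²E[Θ²](2E[Θ²](n₀−1) + 1)] / [2n₀(μ + 2n₀δ̄ − 2β̄p(n₀−1))²]. -/
/-!
Each moment satisfies a linear comparison inequality `f' ≤ -k (f - L) + (forcing)` with rate
`k > 0`. Multiplying by `exp (k t)` shows that `(f - L) exp (k t)` is antitone, so `f` is eventually
below `L + ε`. For `E[V]` this gives the level `μ E[Θ²] / K`, `K = μ + 2 n₀ δ̄ - 2 β̄ p (n₀ - 1)`;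
feeding that bound into the inequality for `E[V²]` (rate `2K / n₀`) gives the stated level, since
an `e`-error in the forcing term only shifts the level by a multiple of `e`.
-/

open Filter Real

/-- `limsup` on `ℝ` is `0` when the set of eventual upper bounds is not bounded below, whence the
assumption `0 ≤ X`. -/
lemma Real.limsup_le_of_forall_pos_eventually_le_add {α : Type*} {l : Filter α} {f : α → ℝ}
    {X : ℝ} (hX : 0 ≤ X) (h : ∀ ε > 0, ∀ᶠ t in l, f t ≤ X + ε) : limsup f l ≤ X := by
  rw [limsup_eq]
  by_cases hb : BddBelow {a : ℝ | ∀ᶠ t in l, f t ≤ a}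
  · exact le_of_forall_pos_le_add fun ε hε ↦ csInf_le hb (h ε hε)
  · rwa [Real.sInf_of_not_bddBelow hb]

section Comparison

variable {f : ℝ → ℝ} {k L T : ℝ}

lemma le_add_mul_exp_of_deriv_le (hf : Differentiable ℝ f)
    (h : ∀ t ≥ T, deriv f t ≤ -k * (f t - L)) :
    ∀ t ≥ T, f t ≤ L + (f T - L) * exp (-k * (t - T)) := by
  set g : ℝ → ℝ := fun t ↦ (f t - L) * exp (k * t)
  have hg : ∀ t, HasDerivAt g ((deriv f t + k * (f t - L)) * exp (k * t)) t := fun t ↦ by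
    have hexp : HasDerivAt (fun t ↦ exp (k * t)) (exp (k * t) * k) t :=
      ((hasDerivAt_id t).const_mul k).exp.congr_deriv (by simp)
    exact ((hf t).hasDerivAt.sub_const L).mul hexp |>.congr_deriv (by ring)
  have hanti : AntitoneOn g (Set.Ici T) := by
    refine antitoneOn_of_deriv_nonpos (convex_Ici T)
      (HasDerivAt.continuousOn fun t _ ↦ hg t)
      (fun t _ ↦ (hg t).differentiableAt.differentiableWithinAt) fun t ht ↦ ?_
    rw [interior_Ici] at ht
    rw [(hg t).deriv]
    exact mul_nonpos_of_nonpos_of_nonneg (by linarith [h t ht.le]) (exp_pos _).le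
  intro t ht
  have hgt : (f t - L) * exp (k * t) ≤ (f T - L) * exp (k * T) :=
    hanti Set.self_mem_Ici ht ht
  have hexp : exp (-k * (t - T)) = exp (k * T) / exp (k * t) := by
    rw [← exp_sub]; ring_nf
  have hdiv : f t - L ≤ (f T - L) * exp (k * T) / exp (k * t) := (le_div_iff₀ (exp_pos _)).mpr hgt
  rw [hexp, ← mul_div_assoc]
  linarith

lemma eventually_le_add_of_deriv_le (hk : 0 < k) (hf : Differentiable ℝ f)
    (h : ∀ t ≥ T, deriv f t ≤ -k * (f t - L)) : ∀ ε > 0, ∀ᶠ t in atTop, f t ≤ L + ε := by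
  intro ε hε
  have hdecay : Tendsto (fun t ↦ (f T - L) * exp (-k * (t - T))) atTop (nhds 0) := by
    have : Tendsto (fun t ↦ -k * (t - T)) atTop atBot :=
      (tendsto_const_mul_atBot_of_neg (neg_neg_of_pos hk)).2 (tendsto_atTop_add_const_right _ _
        tendsto_id)
    simpa using (tendsto_exp_atBot.comp this).const_mul (f T - L)
  filter_upwards [hdecay.eventually (gt_mem_nhds hε), eventually_ge_atTop T] with t hsmall ht
  linarith [le_add_mul_exp_of_deriv_le hf h t ht]

/-- Once `g ≤ M + e`, the forcing term only raises the comparison level `L` by `b e / k`. -/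
lemma eventually_le_add_of_deriv_le_of_forcing {g : ℝ → ℝ} {b M : ℝ} (hk : 0 < k) (hb : 0 ≤ b)
    (hf : Differentiable ℝ f) (hg : ∀ e > 0, ∀ᶠ t in atTop, g t ≤ M + e)
    (h : ∀ t ≥ T, deriv f t ≤ -k * (f t - L) + b * (g t - M)) :
    ∀ ε > 0, ∀ᶠ t in atTop, f t ≤ L + ε := by
  intro ε hε
  set e := k * ε / (2 * (b + 1))
  have he : 0 < e := by positivity
  have hshift : b * e / k ≤ ε / 2 := by
    rw [div_le_iff₀ hk]
    calc b * e = k * ε / 2 * (b / (b + 1)) := by simp only [e]; field_simp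
      _ ≤ k * ε / 2 * 1 := by gcongr; exact div_le_one_of_le₀ (by linarith) (by linarith)
      _ = ε / 2 * k := by ring
  obtain ⟨T', hT'⟩ := eventually_atTop.1 (hg e he)
  have hcomp : ∀ t ≥ max T T', deriv f t ≤ -k * (f t - (L + b * e / k)) := fun t ht ↦ by
    have hgt := mul_le_mul_of_nonneg_left (hT' t (le_of_max_le_right ht)) hb
    have : -k * (f t - (L + b * e / k)) = -k * (f t - L) + b * e := by field_simp; ring
    linarith [h t (le_of_max_le_left ht)]
  filter_upwards [eventually_le_add_of_deriv_le hk hf hcomp (ε / 2) (by positivity)] with t ht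
  linarith

end Comparison

theorem stmt_13_general (n₀ : ℕ) (hn₀ : 1 ≤ n₀) (βbar δbar μ p : ℝ)
    (hμ : 0 < μ)
    (hstab : βbar * p * (n₀ - 1) < n₀ * δbar)
    (EΘ2 EΘ4 : ℝ) (hEΘ2 : 0 ≤ EΘ2) (hEΘ4 : 0 ≤ EΘ4)
    (EV EV2 : ℝ → ℝ) (hEVdiff : Differentiable ℝ EV) (hEV2diff : Differentiable ℝ EV2)
    (hEV : ∀ t, 0 ≤ t → deriv EV t
      ≤ ((2 * βbar * p * (n₀ - 1) - 2 * n₀ * δbar - μ) / n₀) * EV t + μ * EΘ2 / n₀)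
    (hEV2 : ∀ t, 0 ≤ t → deriv EV2 t
      ≤ (2 * (2 * βbar * p * (n₀ - 1) - 2 * n₀ * δbar - μ) / n₀) * EV2 t
        + (μ * (2 * EΘ2 * (n₀ - 1) + 1) / n₀ ^ 2) * EV t + μ * EΘ4 / n₀ ^ 2) :
    limsup EV2 atTop
      ≤ (μ * EΘ4 * (μ + 2 * n₀ * δbar - 2 * βbar * p * (n₀ - 1))
          + μ ^ 2 * EΘ2 * (2 * EΘ2 * (n₀ - 1) + 1))
        / (2 * n₀ * (μ + 2 * n₀ * δbar - 2 * βbar * p * (n₀ - 1)) ^ 2) := by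
  set n : ℝ := (n₀ : ℝ)
  set K := μ + 2 * n * δbar - 2 * βbar * p * (n - 1)
  have hn : 0 < n := by simp only [n]; exact_mod_cast hn₀
  have hK : 0 < K := by simp only [K]; linarith
  have hEV_comp : ∀ t ≥ 0, deriv EV t ≤ -(K / n) * (EV t - μ * EΘ2 / K) := fun t ht ↦ by
    convert hEV t ht using 1
    field_simp
    ring
  have hEV_lim := eventually_le_add_of_deriv_le (by positivity) hEVdiff hEV_comp
  set X := (μ * EΘ4 * K + μ ^ 2 * EΘ2 * (2 * EΘ2 * (n - 1) + 1)) / (2 * n * K ^ 2)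
  have hEV2_comp : ∀ t ≥ 0, deriv EV2 t ≤ -(2 * K / n) * (EV2 t - X)
      + μ * (2 * EΘ2 * (n - 1) + 1) / n ^ 2 * (EV t - μ * EΘ2 / K) := fun t ht ↦ by
    convert hEV2 t ht using 1
    simp only [X]
    field_simp
    ring
  have hn1 : 0 ≤ n - 1 := by simp only [n]; exact sub_nonneg.mpr (by exact_mod_cast hn₀)
  have hb : 0 ≤ μ * (2 * EΘ2 * (n - 1) + 1) / n ^ 2 := by positivity
  have hX : 0 ≤ X := by positivity
  exact Real.limsup_le_of_forall_pos_eventually_le_add hX <|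
    eventually_le_add_of_deriv_le_of_forcing (by positivity) hb hEV2diff hEV_lim hEV2_comp

theorem stmt_13 (n₀ : ℕ) (hn₀ : 1 ≤ n₀) (βbar δbar μ p : ℝ)
    (hβ : 0 < βbar) (hδ : 0 < δbar) (hμ : 0 < μ) (hp : 0 < p) (hp1 : p < 1)
    (hstab : βbar * p * (n₀ - 1) < n₀ * δbar)
    (EΘ2 EΘ4 : ℝ) (hEΘ2 : 0 ≤ EΘ2) (hEΘ4 : 0 ≤ EΘ4)
    (EV EV2 : ℝ → ℝ) (hEVdiff : Differentiable ℝ EV) (hEV2diff : Differentiable ℝ EV2)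
    (hEV : ∀ t, 0 ≤ t → deriv EV t
      ≤ ((2 * βbar * p * (n₀ - 1) - 2 * n₀ * δbar - μ) / n₀) * EV t + μ * EΘ2 / n₀)
    (hEV2 : ∀ t, 0 ≤ t → deriv EV2 t
      ≤ (2 * (2 * βbar * p * (n₀ - 1) - 2 * n₀ * δbar - μ) / n₀) * EV2 t
        + (μ * (2 * EΘ2 * (n₀ - 1) + 1) / n₀ ^ 2) * EV t + μ * EΘ4 / n₀ ^ 2) :
    limsup EV2 atTop
      ≤ (μ * EΘ4 * (μ + 2 * n₀ * δbar - 2 * βbar * p * (n₀ - 1))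
          + μ ^ 2 * EΘ2 * (2 * EΘ2 * (n₀ - 1) + 1))
        / (2 * n₀ * (μ + 2 * n₀ * δbar - 2 * βbar * p * (n₀ - 1)) ^ 2) :=
  stmt_13_general n₀ hn₀ βbar δbar μ p hμ hstab EΘ2 EΘ4 hEΘ2 hEΘ4 EV EV2 hEVdiff hEV2diff hEV hEV2
end
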